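/- arXiv:2506.09455 — 3 statements merged into one kernel-verified Lean document; each statement's English description precedes it below -/
import Mathlib

section
/- Let W ∈ ℝ^{m×n}, b ∈ ℝ^m, V ∈ ℝ^{p×m}, c ∈ ℝ^p, and let φ, ψ : ℝ → ℝ be arbitrary functions applied componentwise. Let B ⊆ {1,…,m} be a bucket with complement B̄, and let l, u ∈ ℝ^{B} with l ≤ u define the box I = ∏_{i∈B}[l_i,u_i]. Fix an input h ∈ ℝ^n and suppose φ((Wh+b)_i) ∈ [l_i,u_i] for every i ∈ B. Then ψ(V·φ(Wh+b) + c) ∈ { ψ(V_{(·,B̄)}·φ(W_{(B̄,·)} h + b_{(B̄)}) + c + V_{(·,B)} t) : t ∈ I }, i.e., the layer-(k+1) output of the original two-layer block is contained in the output set of the merged block in which the neurons of B are removed and compensated by the interval bias V_{(·,B)}·I. -/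
/-- **Local (two-layer) form of the Neuron Merging proposition (CORA, Prop. 4).**
Fix a two-layer block `h ↦ ψ (V · φ (W h + b) + c)`, a bucket `B` of neurons of the
hidden layer, and a box `I = ∏_{i ∈ B} [l i, u i]` containing the hidden values
`φ((W h + b)_i)` for `i ∈ B`.  Then the block's output lies in the output set of the
merged block, in which the neurons of `B` are removed and compensated by the interval
bias `V_{(·,B)}·I`. -/
theorem neuron_merging_local {m n p : ℕ}
    (W : Matrix (Fin m) (Fin n) ℝ) (b : Fin m → ℝ)
    (V : Matrix (Fin p) (Fin m) ℝ) (c : Fin p → ℝ)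
    (φ ψ : ℝ → ℝ) (B : Finset (Fin m))
    (l u : {i : Fin m // i ∈ B} → ℝ) (hlu : ∀ i, l i ≤ u i)
    (h : Fin n → ℝ)
    (hbox : ∀ i : {i : Fin m // i ∈ B},
      φ ((W.mulVec h + b) i.val) ∈ Set.Icc (l i) (u i)) :
    (fun j : Fin p => ψ ((V.mulVec (fun i => φ ((W.mulVec h + b) i)) + c) j)) ∈
      {y : Fin p → ℝ | ∃ t ∈ Set.Icc l u,
        y = fun j : Fin p => ψ ((∑ i : {i : Fin m // i ∉ B},
              V j i.val * φ ((W.mulVec h + b) i.val)) + c j +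
            ∑ i : {i : Fin m // i ∈ B}, V j i.val * t i)} := by
  refine ⟨fun i => φ ((W.mulVec h + b) i.val), ⟨fun i => (hbox i).1, fun i => (hbox i).2⟩, ?_⟩
  funext j
  congr 1
  set f : Fin m → ℝ := fun i => V j i * φ ((W.mulVec h + b) i) with hf
  have h1 : ∑ i : {i : Fin m // i ∈ B}, f i.val = ∑ i ∈ B, f i :=
    (Finset.sum_subtype B (fun _ => Iff.rfl) f).symm
  have h2 : ∑ i : {i : Fin m // i ∉ B}, f i.val = ∑ i ∈ Bᶜ, f i :=
    (Finset.sum_subtype Bᶜ (fun x => Finset.mem_compl) f).symm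
  calc (V.mulVec (fun i => φ ((W.mulVec h + b) i)) + c) j
      = (∑ i : Fin m, f i) + c j := rfl
    _ = (∑ i ∈ B, f i + ∑ i ∈ Bᶜ, f i) + c j := by rw [Finset.sum_add_sum_compl]
    _ = _ := by rw [← h1, ← h2]; ring
end

section
/- Let f̂ be an abstract network with L layers, weight matrices Ŵ_k, bias vectors b̂_k, interval bias sets Ê_k, and activations φ_k, with layer output sets Ĥ_0(x) = {x} and Ĥ_k(x) = φ_k(Ŵ_k Ĥ_{k-1}(x) + b̂_k ⊕ Ê_k). Let P ⊆ ℝ^{n_0} be an input set, k ∈ {1,…,L−1} a hidden layer index with Ê_{k+1} = {0}, B ⊆ {1,…,n_k} a bucket with complement B̄, and I = ∏_{i∈B}[l_i,u_i] a box such that for every x ∈ P and every h ∈ Ĥ_k(x), the subvector h_{(B)} lies in I. Define the abstract network f̂' that is identical to f̂ except Ŵ'_k = Ŵ_{k(B̄,·)}, b̂'_k = b̂_{k(B̄)}, Ê'_k = Ê_{k(B̄)}, Ŵ'_{k+1} = Ŵ_{k+1(·,B̄)}, b̂'_{k+1} = b̂_{k+1}, and Ê'_{k+1} = Ŵ_{k+1(·,B)}·I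 = { Ŵ_{k+1(·,B)} t : t ∈ I }. Then for every x ∈ P, f̂(x) ⊆ f̂'(x). -/
/-- Layer output sets of an abstract network: `Ĥ_0 = {x}` and
`Ĥ_{k+1} = φ_{k+1}(Ŵ_{k+1} Ĥ_k + b̂_{k+1} ⊕ Ê_{k+1})`, where `⊕` is the Minkowski sum.
The data of (paper-)layer `k+1` is indexed by `k`. -/
def absLayer (N : ℕ → Type) [∀ k, Fintype (N k)]
    (W : ∀ k, Matrix (N (k + 1)) (N k) ℝ) (b : ∀ k, N (k + 1) → ℝ)
    (E : ∀ k, Set (N (k + 1) → ℝ)) (φ : ℕ → ℝ → ℝ) (x : N 0 → ℝ) :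
    (k : ℕ) → Set (N k → ℝ)
  | 0 => {x}
  | k + 1 => {v | ∃ h ∈ absLayer N W b E φ x k, ∃ e ∈ E k,
      v = fun i => φ k (((W k).mulVec h + b k + e) i)}

/-- Neuron index types of the merged network: at layer `k` the neurons of the bucket `B`
are removed (the remaining neurons are those of the complement `B̄`); all other layers
are unchanged. -/
def mergedN (N : ℕ → Type) (k : ℕ) (B : Set (N k)) (j : ℕ) : Type :=
  if j = k then {i : N k // i ∉ B} else N j

theorem mergedN_eq_of_eq (N : ℕ → Type) (k : ℕ) (B : Set (N k)) {j : ℕ} (h : j = k) :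
    mergedN N k B j = {i : N k // i ∉ B} := if_pos h

theorem mergedN_eq_of_ne (N : ℕ → Type) (k : ℕ) (B : Set (N k)) {j : ℕ} (h : j ≠ k) :
    mergedN N k B j = N j := if_neg h

/-- The canonical map from merged neuron indices back to original neuron indices:
the subtype inclusion `B̄ ↪ N k` at layer `k`, and the identity elsewhere. -/
def mergedEmb (N : ℕ → Type) (k : ℕ) (B : Set (N k)) (j : ℕ) (i : mergedN N k B j) :
    N j :=
  if h : j = k then
    cast (congrArg N h).symm ((cast (mergedN_eq_of_eq N k B h) i).val)
  else cast (mergedN_eq_of_ne N k B h) i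

instance mergedN.instFintype (N : ℕ → Type) [∀ j, Fintype (N j)] (k : ℕ)
    (B : Set (N k)) [DecidablePred (· ∈ B)] (j : ℕ) : Fintype (mergedN N k B j) := by
  unfold mergedN
  split
  · exact Subtype.fintype _
  · infer_instance

/-- Weights of the merged network: `Ŵ'_k = Ŵ_{k(B̄,·)}`, `Ŵ'_{k+1} = Ŵ_{k+1(·,B̄)}`, and
all other weight matrices unchanged. -/
def mergedW (N : ℕ → Type) (k : ℕ) (B : Set (N k))
    (W : ∀ j, Matrix (N (j + 1)) (N j) ℝ) (j : ℕ) :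
    Matrix (mergedN N k B (j + 1)) (mergedN N k B j) ℝ :=
  fun i₂ i₁ => W j (mergedEmb N k B (j + 1) i₂) (mergedEmb N k B j i₁)

/-- Biases of the merged network: `b̂'_k = b̂_{k(B̄)}` and all other biases unchanged. -/
def mergedb (N : ℕ → Type) (k : ℕ) (B : Set (N k))
    (b : ∀ j, N (j + 1) → ℝ) (j : ℕ) : mergedN N k B (j + 1) → ℝ :=
  fun i => b j (mergedEmb N k B (j + 1) i)

/-- Interval bias sets of the merged network: `Ê'_{k+1} = Ŵ_{k+1(·,B)}·I` (where
`I = [l, u]` is the box over the bucket `B`), `Ê'_k = Ê_{k(B̄)}`, and all other interval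
bias sets unchanged. -/
def mergedE (N : ℕ → Type) [∀ j, Fintype (N j)] (k : ℕ) (B : Set (N k))
    [DecidablePred (· ∈ B)] (W : ∀ j, Matrix (N (j + 1)) (N j) ℝ)
    (E : ∀ j, Set (N (j + 1) → ℝ)) (l u : {i : N k // i ∈ B} → ℝ) (j : ℕ) :
    Set (mergedN N k B (j + 1) → ℝ) :=
  if h : j = k then
    {v | ∃ t ∈ Set.Icc l u, v = fun i₂ => ∑ i : {i : N k // i ∈ B},
        W j (mergedEmb N k B (j + 1) i₂) (cast (congrArg N h).symm i.val) * t i}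
  else (fun e => e ∘ mergedEmb N k B (j + 1)) '' E j

section Aux
variable (N : ℕ → Type) [∀ j, Fintype (N j)] (k : ℕ) (B : Set (N k))
  [DecidablePred (· ∈ B)]

omit [∀ j, Fintype (N j)] [DecidablePred (· ∈ B)] in
theorem mergedEmb_ne {j : ℕ} (h : j ≠ k) :
    mergedEmb N k B j = cast (mergedN_eq_of_ne N k B h) := by
  funext i; simp [mergedEmb, h]

theorem sum_mergedEmb_ne {j : ℕ} (h : j ≠ k) (f : N j → ℝ) :
    ∑ i : mergedN N k B j, f (mergedEmb N k B j i) = ∑ i : N j, f i := by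
  rw [mergedEmb_ne N k B h]
  exact Fintype.sum_bijective _ (Equiv.cast (mergedN_eq_of_ne N k B h)).bijective _ _
    (fun _ => rfl)

omit [∀ j, Fintype (N j)] [DecidablePred (· ∈ B)] in
theorem mergedEmb_eq (i : mergedN N k B k) :
    mergedEmb N k B k i = (cast (mergedN_eq_of_eq N k B rfl) i).val := by
  simp [mergedEmb]

theorem sum_mergedEmb_eq (f : N k → ℝ) :
    ∑ i : mergedN N k B k, f (mergedEmb N k B k i)
      = ∑ i : {i : N k // i ∉ B}, f i.val := by
  simp only [mergedEmb_eq]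
  exact Fintype.sum_bijective _ (Equiv.cast (mergedN_eq_of_eq N k B rfl)).bijective _ _
    (fun _ => rfl)

end Aux

/-- **Neuron merging over-approximates an abstract network (Corollary 1, part 1).**
Let `f̂` be an abstract network with `L` layers, `k ∈ {1,…,L-1}` a hidden layer with
`Ê_{k+1} = {0}` (its data is indexed by `k`, and layer `k`'s data by `k - 1`), `B` a
bucket of neurons of layer `k`, and `I = [l, u]` a box containing `h_{(B)}` for every
`x ∈ P` and every `h ∈ Ĥ_k(x)`.  Then the merged abstract network `f̂'` obtained from
`f̂` by removing the neurons of `B` and compensating with the interval bias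
`Ŵ_{k+1(·,B)}·I` satisfies `f̂(x) ⊆ f̂'(x)` for every `x ∈ P`. -/

theorem neuron_merging_over_approximates (N : ℕ → Type) [∀ j, Fintype (N j)]
    (L k : ℕ) (hk1 : 1 ≤ k) (hkL : k + 1 ≤ L)
    (W : ∀ j, Matrix (N (j + 1)) (N j) ℝ) (b : ∀ j, N (j + 1) → ℝ)
    (E : ∀ j, Set (N (j + 1) → ℝ)) (φ : ℕ → ℝ → ℝ)
    (P : Set (N 0 → ℝ)) (B : Set (N k)) [DecidablePred (· ∈ B)]
    (l u : {i : N k // i ∈ B} → ℝ)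
    (hEk : E k = {0})
    (hbox : ∀ x ∈ P, ∀ h ∈ absLayer N W b E φ x k,
      (fun i : {i : N k // i ∈ B} => h i.val) ∈ Set.Icc l u) :
    ∀ x ∈ P, ∀ v ∈ absLayer N W b E φ x L,
      v ∘ mergedEmb N k B L ∈
        absLayer (mergedN N k B) (mergedW N k B W) (mergedb N k B b)
          (mergedE N k B W E l u) φ (x ∘ mergedEmb N k B 0) L := by
  intro x hx
  suffices H : ∀ j, ∀ v ∈ absLayer N W b E φ x j,
      v ∘ mergedEmb N k B j ∈ absLayer (mergedN N k B) (mergedW N k B W) (mergedb N k B b)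
        (mergedE N k B W E l u) φ (x ∘ mergedEmb N k B 0) j from fun v hv => H L v hv
  intro j
  induction j with
  | zero =>
    intro v hv
    rw [Set.eq_of_mem_singleton hv]
    exact rfl
  | succ j ih =>
    intro v hv
    obtain ⟨h, hh, e, he, rfl⟩ := hv
    by_cases hjk : j = k
    · subst hjk
      rw [hEk] at he
      rw [Set.eq_of_mem_singleton he]
      refine ⟨h ∘ mergedEmb N j B j, ih h hh,
        fun i₂ => ∑ i : {i : N j // i ∈ B},
          W j (mergedEmb N j B (j + 1) i₂) i.val * h i.val, ?_, ?_⟩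
      · rw [mergedE, dif_pos rfl]
        exact ⟨fun i => h i.val, hbox x hx h hh, rfl⟩
      · funext i₂
        simp only [Function.comp_apply, Pi.add_apply, Matrix.mulVec, dotProduct,
          mergedW, mergedb, Pi.zero_apply, add_zero]
        congr 1
        rw [← Fintype.sum_subtype_add_sum_subtype (· ∈ B)
          (fun i => W j (mergedEmb N j B (j + 1) i₂) i * h i)]
        rw [sum_mergedEmb_eq N j B (fun i => W j (mergedEmb N j B (j + 1) i₂) i * h i)]
        ring
    · refine ⟨h ∘ mergedEmb N k B j, ih h hh, e ∘ mergedEmb N k B (j + 1), ?_, ?_⟩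
      · rw [mergedE, dif_neg hjk]
        exact ⟨e, he, rfl⟩
      · funext i₂
        simp only [Function.comp_apply, Pi.add_apply, Matrix.mulVec, dotProduct,
          mergedW, mergedb]
        rw [← sum_mergedEmb_ne N k B hjk
          (fun i => W j (mergedEmb N k B (j + 1) i₂) i * h i)]
end

section
/- Let f̂ be an abstract network with L layers, weight matrices Ŵ_k ∈ ℝ^{n_k × n_{k-1}}, bias vectors b̂_k ∈ ℝ^{n_k}, interval bias sets Ê_k ⊆ ℝ^{n_k}, and activations φ_k applied componentwise, with output set f̂(x) = Ĥ_L(x) where Ĥ_0(x) = {x} and Ĥ_k(x) = φ_k(Ŵ_k Ĥ_{k-1}(x) + b̂_k ⊕ Ê_k). For parameters p = (p_1,…,p_L) with p_k ∈ ℝ^{n_k}, let f̃(x; p) be the ordinary DNN output defined by h_0 = x and h_k = φ_k(Ŵ_k h_{k-1} + b̂_k + p_k). Then for every input x, f̂(x) = { f̃(x; p) : p_k ∈ Ê_k for all k ∈ {1,…,L} }. -/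
/-- Layer outputs of the ordinary DNN obtained by adding, in each layer, a skip-connected
parameter vector `p_k` to the bias: `h_0 = x`, `h_{k+1} = φ_{k+1}(Ŵ_{k+1} h_k + b̂_{k+1} + p_{k+1})`. -/
def paramLayer (N : ℕ → Type) [∀ k, Fintype (N k)]
    (W : ∀ k, Matrix (N (k + 1)) (N k) ℝ) (b : ∀ k, N (k + 1) → ℝ)
    (φ : ℕ → ℝ → ℝ) (p : ∀ k, N (k + 1) → ℝ) (x : N 0 → ℝ) :
    (k : ℕ) → N k → ℝ
  | 0 => x
  | k + 1 => fun i => φ k (((W k).mulVec (paramLayer N W b φ p x k) + b k + p k) i)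

/-- `paramLayer` at level `L` only depends on `p k` for `k < L`. -/
lemma paramLayer_congr (N : ℕ → Type) [∀ k, Fintype (N k)]
    (W : ∀ k, Matrix (N (k + 1)) (N k) ℝ) (b : ∀ k, N (k + 1) → ℝ)
    (φ : ℕ → ℝ → ℝ) (p q : ∀ k, N (k + 1) → ℝ) (x : N 0 → ℝ) (L : ℕ)
    (h : ∀ k < L, p k = q k) :
    paramLayer N W b φ p x L = paramLayer N W b φ q x L := by
  induction L with
  | zero => rfl
  | succ n ih =>
    have hn : paramLayer N W b φ p x n = paramLayer N W b φ q x n :=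
      ih fun k hk => h k (Nat.lt_succ_of_lt hk)
    simp only [paramLayer, hn, h n (Nat.lt_succ_self n)]

/-- **Exactness of the skip-connection encoding of interval biases.**
The output set of an abstract network equals the set of outputs of the augmented ordinary
DNN `f̃(x; p)` as the fresh bias parameters `p_k` range over the interval bias sets `Ê_k`. -/
theorem abs_eq_param_outputs (N : ℕ → Type) [∀ k, Fintype (N k)] (L : ℕ)
    (W : ∀ k, Matrix (N (k + 1)) (N k) ℝ) (b : ∀ k, N (k + 1) → ℝ)
    (E : ∀ k, Set (N (k + 1) → ℝ)) (φ : ℕ → ℝ → ℝ) (x : N 0 → ℝ) :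
    absLayer N W b E φ x L =
      {y | ∃ p : ∀ k, N (k + 1) → ℝ, (∀ k < L, p k ∈ E k) ∧
        y = paramLayer N W b φ p x L} := by
  induction L with
  | zero =>
    ext y
    simp only [absLayer, Set.mem_singleton_iff, Set.mem_setOf_eq]
    constructor
    · rintro rfl
      exact ⟨fun _ => 0, fun k hk => absurd hk (Nat.not_lt_zero k), rfl⟩
    · rintro ⟨p, -, rfl⟩; rfl
  | succ n ih =>
    ext y
    simp only [absLayer, Set.mem_setOf_eq, ih]
    constructor
    · rintro ⟨h, ⟨p, hp, rfl⟩, e, he, rfl⟩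
      classical
      refine ⟨Function.update p n e, ?_, ?_⟩
      · intro k hk
        rcases Nat.lt_succ_iff_lt_or_eq.mp hk with hk | rfl
        · rw [Function.update_of_ne (Nat.ne_of_lt hk)]; exact hp k hk
        · rw [Function.update_self]; exact he
      · have : paramLayer N W b φ (Function.update p n e) x n
            = paramLayer N W b φ p x n :=
          paramLayer_congr _ _ _ _ _ _ _ _
            (fun k hk => Function.update_of_ne (Nat.ne_of_lt hk) _ _)
        simp only [paramLayer, this, Function.update_self]
    · rintro ⟨p, hp, rfl⟩
      exact ⟨paramLayer N W b φ p x n,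
        ⟨p, fun k hk => hp k (Nat.lt_succ_of_lt hk), rfl⟩,
        p n, hp n (Nat.lt_succ_self n), rfl⟩
end
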